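/- Suppose Σᵢ arccot(λᵢ) ∈ (δ₁, π/2 − δ₁) for some δ₁ ∈ (0, π/4), with λ₁ ≥ ⋯ ≥ λₙ, and suppose λₙ ≥ √(κ(λ₁² − 1)) for some κ > 0. Then tan(δ₁) ≤ λₙ ≤ cot(δ₁/n), and consequently λ₁ ≤ √(1 + κ⁻¹·cot²(δ₁/n)). -/

import Mathlib

open Real

noncomputable def arccot (x : ℝ) : ℝ := π / 2 - arctan x

lemma arccot_pos (x : ℝ) : 0 < arccot x := by
  unfold arccot
  linarith [arctan_lt_pi_div_two x]

lemma arccot_antitone : Antitone arccot := fun _ _ h => by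
  unfold arccot
  linarith [arctan_mono h]

lemma tan_lt_of_arccot_lt_pi_div_two_sub {θ x : ℝ} (hθ : -(π / 2) < θ)
    (h : arccot x < π / 2 - θ) : tan θ < x := by
  have hθx : θ < arctan x := by unfold arccot at h; linarith
  simpa only [tan_arctan] using
    tan_lt_tan_of_lt_of_lt_pi_div_two hθ (arctan_lt_pi_div_two x) hθx

lemma lt_cot_of_lt_arccot {θ x : ℝ} (hθ : 0 < θ) (h : θ < arccot x) : x < cot θ := by
  have hx : arctan x < π / 2 - θ := by unfold arccot at h; linarith
  have := tan_lt_tan_of_lt_of_lt_pi_div_two (neg_pi_div_two_lt_arctan x) (by linarith) hx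
  rwa [tan_arctan, tan_pi_div_two_sub, tan_eq_sin_div_cos, inv_div, ← cot_eq_cos_div_sin] at this

lemma arccot_le_sum_arccot {ι : Type*} [Fintype ι] (lam : ι → ℝ) (j : ι) :
    arccot (lam j) ≤ ∑ i, arccot (lam i) :=
  Finset.single_le_sum (fun i _ => (arccot_pos (lam i)).le) (Finset.mem_univ j)

lemma sum_arccot_le_card_mul {ι : Type*} [Fintype ι] (lam : ι → ℝ) {j : ι}
    (hj : ∀ i, lam j ≤ lam i) : ∑ i, arccot (lam i) ≤ Fintype.card ι * arccot (lam j) := by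
  simpa using Finset.sum_le_card_nsmul Finset.univ _ _ fun i _ => arccot_antitone (hj i)

lemma le_sqrt_one_add_inv_mul_sq {κ a C : ℝ} (hκ : 0 < κ) (h : √(κ * (a ^ 2 - 1)) ≤ C) :
    a ≤ √(1 + κ⁻¹ * C ^ 2) := by
  have hsq : a ^ 2 - 1 ≤ κ⁻¹ * C ^ 2 := by
    rw [inv_mul_eq_div, le_div_iff₀ hκ]
    linarith [(sqrt_le_iff.mp h).2]
  exact (le_abs_self a).trans (abs_le_sqrt (by linarith))

theorem stmt11_general (n : ℕ) (lam : Fin (n + 1) → ℝ) (δ₁ κ : ℝ)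
    (hδ0 : 0 < δ₁)
    (hlo : δ₁ < ∑ i, arccot (lam i)) (hhi : ∑ i, arccot (lam i) < π / 2 - δ₁)
    (hsort : ∀ i j : Fin (n + 1), i ≤ j → lam j ≤ lam i)
    (hκ : 0 < κ)
    (hlow : Real.sqrt (κ * (lam 0 ^ 2 - 1)) ≤ lam (Fin.last n)) :
    Real.tan δ₁ ≤ lam (Fin.last n) ∧
      lam (Fin.last n) ≤ Real.cot (δ₁ / (n + 1)) ∧
      lam 0 ≤ Real.sqrt (1 + κ⁻¹ * Real.cot (δ₁ / (n + 1)) ^ 2) := by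
  have hmin : ∀ i, lam (Fin.last n) ≤ lam i := fun i => hsort i _ (Fin.le_last i)
  have htan : tan δ₁ < lam (Fin.last n) :=
    tan_lt_of_arccot_lt_pi_div_two_sub (by linarith [pi_pos])
      ((arccot_le_sum_arccot lam _).trans_lt hhi)
  have hcot : lam (Fin.last n) < cot (δ₁ / (n + 1)) := by
    refine lt_cot_of_lt_arccot (by positivity) ?_
    have hsum := sum_arccot_le_card_mul lam hmin
    rw [Fintype.card_fin, Nat.cast_succ] at hsum
    rw [div_lt_iff₀ (by positivity)]
    linarith
  exact ⟨htan.le, hcot.le, le_sqrt_one_add_inv_mul_sq hκ (hlow.trans hcot.le)⟩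

theorem stmt11 (n : ℕ) (lam : Fin (n + 1) → ℝ) (δ₁ κ : ℝ)
    (hδ0 : 0 < δ₁) (hδ1 : δ₁ < π / 4)
    (hlo : δ₁ < ∑ i, arccot (lam i)) (hhi : ∑ i, arccot (lam i) < π / 2 - δ₁)
    (hsort : ∀ i j : Fin (n + 1), i ≤ j → lam j ≤ lam i)
    (hκ : 0 < κ)
    (hlow : Real.sqrt (κ * (lam 0 ^ 2 - 1)) ≤ lam (Fin.last n)) :
    Real.tan δ₁ ≤ lam (Fin.last n) ∧
      lam (Fin.last n) ≤ Real.cot (δ₁ / (n + 1)) ∧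
      lam 0 ≤ Real.sqrt (1 + κ⁻¹ * Real.cot (δ₁ / (n + 1)) ^ 2) :=
  stmt11_general n lam δ₁ κ hδ0 hlo hhi hsort hκ hlow
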